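/- arXiv:1712.06629 — 3 statements merged into one kernel-verified Lean document; each statement's English description precedes it below -/
import Mathlib

section
/- Let $(Q_j)_{0 \le j \le k}$ and $(P_j)_{0 \le j \le k}$ be positive reals with $\max\{P_{j+1}, Q_{j+1}\} \le Q_j^{\widetilde{\beta}}$ for all $0 \le j < k$, where $\widetilde{\beta} > 1$ and all quantities are in $(0,1)$. If $\frac{3-\eta}{2} > \sum_{\ell=1}^{k-j} \widetilde{\beta}^{-\ell}$ for some $0 \le j < k$ and $\eta \in (0,1)$, and $C \ge 1$ with the $Q_i$ sufficiently small, then $C^{k-j} \frac{Q_k^{(1-\eta)/2} P_k}{Q_{k-1} Q_{k-2} \cdots Q_{j+1}} \le Q_j$. -/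
/-!
Write `q = Q (k-1)`. Iterating `Q (i+1) ≤ Q i ^ β` backwards gives `q ^ (β⁻¹ ^ (k-1-i)) ≤ Q i`,
so `Q j ⋯ Q (k-1) ≥ q ^ S` with `S = ∑_{ℓ < k-j} β⁻¹ ^ ℓ`, while the numerator
`Q k ^ ((1-η)/2) * P k` is at most `q ^ (β (3-η)/2)`. The hypothesis on the geometric series says
exactly that the gap `e = β (3-η)/2 - S` is positive, so the factor `C ^ (k-j)` is absorbed as soon
as `q ≤ C ^ (-(k-j)/e)`, which is the choice of `δ₀`.
-/

open Finset

section DoublyExponentialDecay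

variable {Q : ℕ → ℝ} {β : ℝ} {N : ℕ}

theorem le_rpow_pow_of_le_rpow (hβ : 0 ≤ β) (hQ : ∀ t < N, 0 ≤ Q t)
    (hstep : ∀ t < N, Q (t + 1) ≤ Q t ^ β) {i m : ℕ} (him : i + m ≤ N) :
    Q (i + m) ≤ Q i ^ β ^ m := by
  induction m with
  | zero => simp
  | succ m ih =>
    calc Q (i + (m + 1)) ≤ Q (i + m) ^ β := hstep (i + m) (by omega)
      _ ≤ (Q i ^ β ^ m) ^ β := Real.rpow_le_rpow (hQ _ (by omega)) (ih (by omega)) hβ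
      _ = Q i ^ β ^ (m + 1) := by rw [← Real.rpow_mul (hQ i (by omega)), pow_succ]

theorem rpow_inv_pow_le_of_le_rpow (hβ : 0 < β) (hQ : ∀ t ≤ N, 0 ≤ Q t)
    (hstep : ∀ t < N, Q (t + 1) ≤ Q t ^ β) {ℓ : ℕ} (hℓ : ℓ ≤ N) :
    Q N ^ β⁻¹ ^ ℓ ≤ Q (N - ℓ) := by
  have h := le_rpow_pow_of_le_rpow hβ.le (fun t ht => hQ t ht.le) hstep
    (i := N - ℓ) (m := ℓ) (by omega)
  rw [Nat.sub_add_cancel hℓ] at h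
  rwa [inv_pow, Real.rpow_inv_le_iff_of_pos (hQ N le_rfl) (hQ _ (Nat.sub_le _ _))
    (by positivity)]

theorem rpow_geom_sum_le_prod (hβ : 0 < β) (hQ : ∀ t ≤ N, 0 < Q t)
    (hstep : ∀ t < N, Q (t + 1) ≤ Q t ^ β) {n : ℕ} (hn : n ≤ N + 1) :
    Q N ^ ∑ ℓ ∈ range n, β⁻¹ ^ ℓ ≤ ∏ ℓ ∈ range n, Q (N - ℓ) := by
  rw [Real.rpow_sum_of_pos (hQ N le_rfl)]
  refine prod_le_prod (fun ℓ _ => (Real.rpow_pos_of_pos (hQ N le_rfl) _).le) fun ℓ hℓ => ?_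
  exact rpow_inv_pow_le_of_le_rpow hβ (fun t ht => (hQ t ht).le) hstep
    (by rw [mem_range] at hℓ; omega)

end DoublyExponentialDecay

theorem prod_range_sub_eq_prod_Ico {M : Type*} [CommMonoid M] (f : ℕ → M) (j k : ℕ) :
    ∏ ℓ ∈ range (k - j), f (k - 1 - ℓ) = ∏ i ∈ Ico j k, f i := by
  rw [prod_Ico_eq_prod_range, ← prod_range_reflect (fun i => f (j + i))]
  exact prod_congr rfl fun ℓ hℓ => by rw [mem_range] at hℓ; congr 1; omega

theorem rpow_mul_le_rpow_of_le_rpow {x y q a β : ℝ} (hx : 0 ≤ x) (hy : 0 ≤ y) (hq : 0 < q)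
    (ha : 0 ≤ a)
    (hxq : x ≤ q ^ β) (hyq : y ≤ q ^ β) : x ^ a * y ≤ q ^ (β * (a + 1)) := by
  calc x ^ a * y ≤ (q ^ β) ^ a * q ^ β := by gcongr
    _ = q ^ (β * (a + 1)) := by rw [← Real.rpow_mul hq.le, ← Real.rpow_add hq, mul_add, mul_one]

theorem rpow_le_rpow_neg_of_le_rpow_div {C q s e : ℝ} (hC : 0 < C) (hq : 0 < q) (he : 0 < e)
    (hqC : q ≤ C ^ (-s / e)) : C ^ s ≤ q ^ (-e) := by
  calc C ^ s = (C ^ (-s / e)) ^ (-e) := by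
        rw [← Real.rpow_mul hC.le]; congr 1; field_simp
    _ ≤ q ^ (-e) := Real.rpow_le_rpow_of_nonpos hq hqC (by linarith)

theorem stmt12_general (βt η C : ℝ) (hβ : 1 < βt) (hη1 : η < 1) (hC : 1 ≤ C)
    (k j : ℕ) (hjk : j < k)
    (hsum : ∑ ℓ ∈ Finset.range (k - j), βt⁻¹ ^ (ℓ + 1) < (3 - η) / 2) :
    ∃ δ₀ : ℝ, 0 < δ₀ ∧ ∀ Q P : ℕ → ℝ,
      (∀ i, i ≤ k → 0 < Q i ∧ Q i < 1) →
      (∀ i, i ≤ k → 0 < P i ∧ P i < 1) →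
      (∀ i, i < k → max (P (i + 1)) (Q (i + 1)) ≤ Q i ^ βt) →
      (∀ i, i ≤ k → Q i ≤ δ₀) →
      C ^ (k - j) * (Q k ^ ((1 - η) / 2) * P k) / ∏ i ∈ Finset.Ioo j k, Q i ≤ Q j := by
  set S := ∑ ℓ ∈ range (k - j), βt⁻¹ ^ ℓ
  set e := βt * ((3 - η) / 2) - S
  have he : 0 < e := by
    have : βt⁻¹ * S < (3 - η) / 2 := by simpa only [S, mul_sum, ← pow_succ'] using hsum
    rw [inv_mul_lt_iff₀ (by positivity)] at this
    exact sub_pos.2 this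
  refine ⟨C ^ (-((k - j : ℕ) : ℝ) / e), by positivity, fun Q P hQ hP hstep hδ => ?_⟩
  have hq : 0 < Q (k - 1) := (hQ _ (by omega)).1
  have hlast := hstep (k - 1) (by omega)
  rw [Nat.sub_add_cancel (by omega : 1 ≤ k), max_le_iff] at hlast
  have hnum : Q k ^ ((1 - η) / 2) * P k ≤ Q (k - 1) ^ (βt * ((3 - η) / 2)) := by
    have h := rpow_mul_le_rpow_of_le_rpow (a := (1 - η) / 2) (hQ k le_rfl).1.le
      (hP k le_rfl).1.le hq (by linarith) hlast.2 hlast.1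
    rwa [show (1 - η) / 2 + 1 = (3 - η) / 2 by ring] at h
  have hCq : C ^ (k - j) ≤ Q (k - 1) ^ (-e) := by
    rw [← Real.rpow_natCast]
    exact rpow_le_rpow_neg_of_le_rpow_div (by positivity) hq he (hδ _ (by omega))
  have hprod : Q (k - 1) ^ S ≤ Q j * ∏ i ∈ Ioo j k, Q i := by
    rw [mul_prod_Ioo_eq_prod_Ico hjk, ← prod_range_sub_eq_prod_Ico]
    exact rpow_geom_sum_le_prod (by linarith) (fun t ht => (hQ t (by omega)).1)
      (fun t ht => (le_max_right _ _).trans (hstep t (by omega))) (by omega)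
  rw [div_le_iff₀ (prod_pos fun i hi => (hQ i (by rw [mem_Ioo] at hi; omega)).1)]
  calc C ^ (k - j) * (Q k ^ ((1 - η) / 2) * P k)
      ≤ Q (k - 1) ^ (-e) * Q (k - 1) ^ (βt * ((3 - η) / 2)) := by
        gcongr
        exact mul_nonneg (Real.rpow_nonneg (hQ k le_rfl).1.le _) (hP k le_rfl).1.le
    _ = Q (k - 1) ^ S := by rw [← Real.rpow_add hq]; congr 1; ring
    _ ≤ Q j * ∏ i ∈ Ioo j k, Q i := hprod

/-- Key inductive inequality in the pre-image propagation argument: if the widths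
decay with exponent `β̃` and `(3−η)/2` dominates the geometric series, then for the
`Q i` sufficiently small, `C^(k−j) · Q k^((1−η)/2) · P k / (Q_{k-1} ⋯ Q_{j+1}) ≤ Q j`. -/
theorem stmt12 (βt η C : ℝ) (hβ : 1 < βt) (hη0 : 0 < η) (hη1 : η < 1) (hC : 1 ≤ C)
    (k j : ℕ) (hjk : j < k)
    (hsum : ∑ ℓ ∈ Finset.range (k - j), βt⁻¹ ^ (ℓ + 1) < (3 - η) / 2) :
    ∃ δ₀ : ℝ, 0 < δ₀ ∧ ∀ Q P : ℕ → ℝ,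
      (∀ i, i ≤ k → 0 < Q i ∧ Q i < 1) →
      (∀ i, i ≤ k → 0 < P i ∧ P i < 1) →
      (∀ i, i < k → max (P (i + 1)) (Q (i + 1)) ≤ Q i ^ βt) →
      (∀ i, i ≤ k → Q i ≤ δ₀) →
      C ^ (k - j) * (Q k ^ ((1 - η) / 2) * P k) / ∏ i ∈ Finset.Ioo j k, Q i ≤ Q j :=
  stmt12_general βt η C hβ hη1 hC k j hjk hsum
end

section
/- Let $\varphi : M \to M$ be a measure-preserving homeomorphism of a compact metric probability space $(M, \mu)$ such that for every $m \ge 1$ the set of periodic points of period $\le m$ has measure zero, and such that $\mu$ is a Borel measure positive on open balls with $\mu(B(x,\eta)) $ comparable to $\pi\eta^2$ (e.g., $M$ is the two-torus with Lebesgue measure and $\varphi$ an aperiodic area-preserving diffeomorphism). Then for every $\varepsilon > 0$ there exist $N \in \mathbb{N}$ and an open set $V \subset M$ with $\mu(M \setminus V) < \varepsilon$ and $\bigcap_{|n| \le N} \varphi^{-n}(V) = \emptyset$. -/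
open MeasureTheory Metric

/-!
Points of period at most `n` form a closed null set, so they have a closed neighbourhood `E` of
small measure. The compact complement of the interior of `E` is covered by finitely many balls
`B i` with null frontiers, the closure of each being disjoint from its first `n` preimages.
Removing from `closure (B i)` all points that `f ^ u`, `|u| ≤ n`, sends into an earlier ball
`B j` gives closed floors whose union `K` meets each of its first `n` preimages only inside the
null frontiers, so `n * μ K ≤ 1` by the pigeonhole form of recurrence. A point of
`closure (B i)` is either in the `i`-th floor or is moved into an earlier ball, so it reaches `K`
within `n * i` steps; hence every orbit segment of length `2 * n * m + 1` meets the closed set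
`E ∪ K`, of measure less than `ε`.
-/

open Filter Topology Set
open scoped ENNReal

theorem Homeomorph.toEquiv_zpow {X : Type*} [TopologicalSpace X] (f : X ≃ₜ X) (u : ℤ) :
    (f ^ u).toEquiv = f.toEquiv ^ u :=
  map_zpow ({ toFun := Homeomorph.toEquiv, map_one' := rfl, map_mul' := fun _ _ => rfl } :
    (X ≃ₜ X) →* Equiv.Perm X) f u

theorem Homeomorph.continuous_toEquiv_zpow {X : Type*} [TopologicalSpace X] (f : X ≃ₜ X)
    (u : ℤ) : Continuous ⇑(f.toEquiv ^ u) :=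
  f.toEquiv_zpow u ▸ (f ^ u).continuous

theorem eventually_smallSets_disjoint_preimage {α : Type*} [TopologicalSpace α] [T2Space α]
    {g : α → α} {x : α} (hg : ContinuousAt g x) (hx : g x ≠ x) :
    ∀ᶠ W in (𝓝 x).smallSets, Disjoint W (g ⁻¹' W) := by
  obtain ⟨s, hs, t, ht, hst⟩ := Filter.disjoint_iff.1 (disjoint_nhds_nhds.2 hx.symm)
  refine (eventually_smallSets' fun W W' hWW' h => ?_).2
    ⟨s ∩ g ⁻¹' t, inter_mem hs (hg ht), ?_⟩
  · exact h.mono hWW' (preimage_mono hWW')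
  · exact disjoint_left.2 fun z hz hgz => disjoint_left.1 hst hgz.1 hz.2

theorem exists_ball_null_frontier_disjoint_preimage_iterate {α : Type*} [MetricSpace α]
    [MeasurableSpace α] [OpensMeasurableSpace α] (μ : Measure α) [SFinite μ] {g : α → α}
    (hg : Continuous g) {n : ℕ} {x : α} (hx : ∀ k ∈ Icc 1 n, g^[k] x ≠ x) :
    ∃ r > 0, μ (frontier (ball x r)) = 0 ∧
      ∀ k ∈ Icc 1 n, Disjoint (closure (ball x r)) (g^[k] ⁻¹' closure (ball x r)) := by
  have hW : ∀ᶠ W in (𝓝 x).smallSets, ∀ k ∈ Icc 1 n, Disjoint W (g^[k] ⁻¹' W) :=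
    (eventually_all_finite (finite_Icc 1 n)).2 fun k hk =>
      eventually_smallSets_disjoint_preimage (hg.iterate k).continuousAt (hx k hk)
  obtain ⟨R, hR, hRW⟩ := nhds_basis_closedBall.smallSets.eventually_iff.1 hW
  obtain ⟨r, ⟨hr, hrR⟩, hfr⟩ := exists_null_frontier_thickening μ {x} hR
  rw [thickening_singleton] at hfr
  exact ⟨r, hr, hfr,
    hRW (closure_ball_subset_closedBall.trans (closedBall_subset_closedBall hrR.le))⟩

theorem IsClosed.exists_isClosed_subset_interior_measure_lt {α : Type*} [TopologicalSpace α]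
    [NormalSpace α] [MeasurableSpace α] {μ : Measure α} [μ.OuterRegular] {s : Set α}
    (hs : IsClosed s) {r : ℝ≥0∞} (hr : μ s < r) :
    ∃ E, IsClosed E ∧ s ⊆ interior E ∧ μ E < r := by
  obtain ⟨U, hsU, hU, hμU⟩ := s.exists_isOpen_lt_of_lt r hr
  obtain ⟨V, hV, hsV, hVU⟩ := normal_exists_closure_subset hs hU hsU
  exact ⟨closure V, isClosed_closure, hsV.trans (hV.subset_interior_iff.2 subset_closure),
    (measure_mono hVU).trans_lt hμU⟩

theorem IsCompact.exists_fin_cover_nhds {X : Type*} [TopologicalSpace X] {s : Set X}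
    (hs : IsCompact s) {U : X → Set X} (hU : ∀ x ∈ s, U x ∈ 𝓝 x) :
    ∃ (m : ℕ) (c : Fin m → X), (∀ i, c i ∈ s) ∧ s ⊆ ⋃ i, U (c i) := by
  obtain ⟨t, hts, hst⟩ := hs.elim_nhds_subcover U hU
  refine ⟨t.card, fun i => t.equivFin.symm i, fun i => hts _ (t.equivFin.symm i).2,
    fun y hy => ?_⟩
  obtain ⟨x, hx, hyx⟩ := mem_iUnion₂.1 (hst hy)
  exact mem_iUnion.2 ⟨t.equivFin ⟨x, hx⟩, by simpa using hyx⟩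

theorem exists_isClosed_measure_lt_and_wandering_cover {M : Type*} [MetricSpace M]
    [CompactSpace M] [MeasurableSpace M] [BorelSpace M] (μ : Measure M)
    [IsFiniteMeasure μ] {g : M → M} (hg : Continuous g) {n : ℕ}
    (hper : ∀ k ∈ Icc 1 n, μ {x | g^[k] x = x} = 0) {r : ℝ≥0∞} (hr : r ≠ 0) :
    ∃ E, IsClosed E ∧ μ E < r ∧ ∃ (m : ℕ) (B : Fin m → Set M), Eᶜ ⊆ ⋃ i, B i ∧
      ∀ i, IsOpen (B i) ∧ μ (frontier (B i)) = 0 ∧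
        ∀ k ∈ Icc 1 n, Disjoint (closure (B i)) (g^[k] ⁻¹' closure (B i)) := by
  set P := ⋃ k ∈ Icc 1 n, {x | g^[k] x = x}
  have hP : IsClosed P :=
    (finite_Icc 1 n).isClosed_biUnion fun k _ => isClosed_eq (hg.iterate k) continuous_id
  have hμP : μ P = 0 := (measure_biUnion_null_iff (finite_Icc 1 n).countable).2 hper
  obtain ⟨E, hE, hPE, hμE⟩ :=
    hP.exists_isClosed_subset_interior_measure_lt (hμP.trans_lt (pos_iff_ne_zero.2 hr))
  have hgood : ∀ x ∈ (interior E)ᶜ, ∃ ρ > 0, μ (frontier (ball x ρ)) = 0 ∧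
      ∀ k ∈ Icc 1 n, Disjoint (closure (ball x ρ)) (g^[k] ⁻¹' closure (ball x ρ)) :=
    fun x hx => exists_ball_null_frontier_disjoint_preimage_iterate μ hg
      fun k hk hkx => hx (hPE (mem_iUnion₂.2 ⟨k, hk, hkx⟩))
  choose! ρ hρ hfr hsep using hgood
  obtain ⟨m, c, hcG, hcover⟩ := isOpen_interior.isClosed_compl.isCompact.exists_fin_cover_nhds
    fun x hx => ball_mem_nhds x (hρ x hx)
  exact ⟨E, hE, hμE, m, fun i => ball (c i) (ρ (c i)),
    fun z hz => hcover fun h => hz (interior_subset h),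
    fun i => ⟨isOpen_ball, hfr _ (hcG i), hsep _ (hcG i)⟩⟩

section Castle

variable {α : Type*} [TopologicalSpace α] (T : Equiv.Perm α) (n : ℕ) {m : ℕ}
  (B : Fin m → Set α)

def castleFloor (i : Fin m) : Set α :=
  closure (B i) \ ⋃ (j) (_ : j < i), ⋃ u ∈ Icc (-(n : ℤ)) n, (T ^ u) ⁻¹' B j

def castle : Set α := ⋃ i, castleFloor T n B i

theorem isClosed_castle (hT : ∀ u : ℤ, Continuous ⇑(T ^ u)) (hB : ∀ i, IsOpen (B i)) :
    IsClosed (castle T n B) :=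
  isClosed_iUnion_of_finite fun _ => isClosed_closure.sdiff <|
    isOpen_iUnion fun j => isOpen_iUnion fun _ =>
      isOpen_biUnion fun u _ => (hB j).preimage (hT u)

theorem exists_zpow_mem_castle (i : Fin m) {y : α} (hy : y ∈ closure (B i)) :
    ∃ t : ℤ, |t| ≤ n * (i : ℕ) ∧ (T ^ t) y ∈ castle T n B := by
  induction i using WellFoundedLT.induction generalizing y with
  | _ i ih =>
  by_cases hyK : y ∈ castleFloor T n B i
  · exact ⟨0, by rw [abs_zero]; positivity, mem_iUnion.2 ⟨i, by simpa using hyK⟩⟩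
  obtain ⟨j, hji, hj⟩ := mem_iUnion₂.1 (not_not.1 fun h => hyK ⟨hy, h⟩)
  obtain ⟨u, hu, hyu⟩ := mem_iUnion₂.1 hj
  obtain ⟨s, hs, hsK⟩ := ih j hji (subset_closure hyu)
  refine ⟨s + u, ?_, by rwa [zpow_add, Equiv.Perm.mul_apply]⟩
  have hji' : (j : ℤ) + 1 ≤ (i : ℕ) := by exact_mod_cast hji
  calc |s + u| ≤ |s| + |u| := abs_add_le s u
    _ ≤ n * (j : ℕ) + n := add_le_add hs (abs_le.2 hu)
    _ ≤ n * (i : ℕ) := by nlinarith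

theorem mem_frontier_of_mem_castleFloor_of_pow_mem {k : ℕ} (hk : k ≤ n)
    (hsep : ∀ i, Disjoint (closure (B i)) ((T ^ k) ⁻¹' closure (B i)))
    {i j : Fin m} {y : α} (hy : y ∈ castleFloor T n B i)
    (hky : (T ^ k) y ∈ castleFloor T n B j) :
    y ∈ frontier (B i) ∨ (T ^ k) y ∈ frontier (B j) := by
  have hkn : (k : ℤ) ∈ Icc (-(n : ℤ)) n := ⟨by omega, by omega⟩
  have hkn' : -(k : ℤ) ∈ Icc (-(n : ℤ)) n := ⟨by omega, by omega⟩
  rcases lt_trichotomy i j with hij | rfl | hji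
  · refine Or.inl ⟨hy.1, fun hyB =>
      hky.2 (mem_iUnion₂.2 ⟨i, hij, mem_iUnion₂.2 ⟨_, hkn', ?_⟩⟩)⟩
    simpa [zpow_neg] using interior_subset hyB
  · exact absurd hky.1 (disjoint_left.1 (hsep i) hy.1)
  · refine Or.inr ⟨hky.1, fun hyB =>
      hy.2 (mem_iUnion₂.2 ⟨j, hji, mem_iUnion₂.2 ⟨_, hkn, ?_⟩⟩)⟩
    rw [mem_preimage, zpow_natCast]
    exact interior_subset hyB

theorem natCast_mul_measure_castle_le [MeasurableSpace α] {μ : Measure α}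
    (hT : MeasurePreserving T μ μ) (hK : NullMeasurableSet (castle T n B) μ)
    (hfr : ∀ i, μ (frontier (B i)) = 0)
    (hsep : ∀ i, ∀ k ∈ Icc 1 n, Disjoint (closure (B i)) ((T ^ k) ⁻¹' closure (B i))) :
    n * μ (castle T n B) ≤ μ univ := by
  have hD : μ (⋃ i, frontier (B i)) = 0 := measure_iUnion_null hfr
  rw [← measure_sdiff_null hD]
  by_contra! hlt
  obtain ⟨x, hx, k, hk, hkx⟩ := hT.exists_mem_iterate_mem_of_measure_univ_lt_mul_measure
    (hK.diff (NullMeasurableSet.of_null hD)) hlt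
  obtain ⟨i, hxi⟩ := mem_iUnion.1 hx.1
  obtain ⟨j, hkxj⟩ := mem_iUnion.1 hkx.1
  rcases mem_frontier_of_mem_castleFloor_of_pow_mem T n B hk.2.le
    (fun i => hsep i k ⟨hk.1, hk.2.le⟩) hxi hkxj with h | h
  · exact hx.2 (mem_iUnion.2 ⟨i, h⟩)
  · exact hkx.2 (mem_iUnion.2 ⟨j, h⟩)

theorem exists_zpow_mem_union_castle {E : Set α} (hcover : Eᶜ ⊆ ⋃ i, B i) (y : α) :
    ∃ t ∈ Icc (-((n * m : ℕ) : ℤ)) ((n * m : ℕ) : ℤ),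
      (T ^ t) y ∈ E ∪ castle T n B := by
  by_cases hy : y ∈ E
  · exact ⟨0, ⟨by omega, by omega⟩, by simpa using Or.inl hy⟩
  obtain ⟨i, hi⟩ := mem_iUnion.1 (hcover hy)
  obtain ⟨t, ht, htK⟩ := exists_zpow_mem_castle T n B i (subset_closure hi)
  have him : (n : ℤ) * (i : ℕ) ≤ ((n * m : ℕ) : ℤ) := by
    push_cast; gcongr; exact_mod_cast i.2.le
  exact ⟨t, abs_le.1 (ht.trans him), Or.inr htK⟩

end Castle

theorem stmt13_general {M : Type*} [MetricSpace M] [CompactSpace M] [MeasurableSpace M] [BorelSpace M]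
    (μ : Measure M) [IsProbabilityMeasure μ]
    (f : M ≃ₜ M) (hpres : MeasurePreserving f μ μ)
    (haper : ∀ m : ℕ, 1 ≤ m → μ {x | (⇑f)^[m] x = x} = 0) :
    ∀ ε : ℝ, 0 < ε → ∃ (N : ℕ) (V : Set M), IsOpen V ∧ μ Vᶜ < ENNReal.ofReal ε ∧
      (⋂ n ∈ Set.Icc (-(N : ℤ)) (N : ℤ), (f.toEquiv ^ n) ⁻¹' V) = ∅ := by
  intro ε hε
  set δ := ENNReal.ofReal ε / 2
  have hδ : δ ≠ 0 := (ENNReal.half_pos (ENNReal.ofReal_pos.2 hε).ne').ne'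
  obtain ⟨n, hn⟩ := ENNReal.exists_inv_nat_lt hδ
  obtain ⟨E, hE, hμE, m, B, hcover, hB⟩ := exists_isClosed_measure_lt_and_wandering_cover μ
    f.continuous (fun k hk => haper k hk.1) hδ
  set K := castle f.toEquiv n B
  have hK : IsClosed K :=
    isClosed_castle _ _ _ f.continuous_toEquiv_zpow fun i => (hB i).1
  have hμK : μ K < δ := by
    have hmul := natCast_mul_measure_castle_le f.toEquiv n B hpres
      hK.measurableSet.nullMeasurableSet (fun i => (hB i).2.1) (fun i => (hB i).2.2)
    rw [measure_univ, mul_comm, ← ENNReal.le_inv_iff_mul_le] at hmul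
    exact hmul.trans_lt hn
  refine ⟨n * m, (E ∪ K)ᶜ, (hE.union hK).isOpen_compl, ?_, ?_⟩
  · rw [compl_compl]
    calc μ (E ∪ K) ≤ μ E + μ K := measure_union_le E K
      _ < δ + δ := ENNReal.add_lt_add hμE hμK
      _ = ENNReal.ofReal ε := ENNReal.add_halves _
  · refine eq_empty_iff_forall_notMem.2 fun y hy => ?_
    obtain ⟨t, ht, hty⟩ := exists_zpow_mem_union_castle f.toEquiv n B hcover y
    exact mem_iInter₂.1 hy t ht hty

/-- Large open sets with empty maximal invariant subset for an aperiodic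
measure-preserving homeomorphism of a compact metric probability space whose
measure of balls is comparable to `π η²`. -/
theorem stmt13 {M : Type*} [MetricSpace M] [CompactSpace M] [MeasurableSpace M] [BorelSpace M]
    (μ : Measure M) [IsProbabilityMeasure μ]
    (f : M ≃ₜ M) (hpres : MeasurePreserving f μ μ)
    (haper : ∀ m : ℕ, 1 ≤ m → μ {x | (⇑f)^[m] x = x} = 0)
    (c₁ c₂ : ℝ) (hc₁ : 0 < c₁) (hc₂ : 0 < c₂)
    (hball : ∀ (x : M) (η : ℝ), 0 < η → η ≤ 1 →
      ENNReal.ofReal (c₁ * Real.pi * η ^ 2) ≤ μ (ball x η) ∧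
      μ (ball x η) ≤ ENNReal.ofReal (c₂ * Real.pi * η ^ 2)) :
    ∀ ε : ℝ, 0 < ε → ∃ (N : ℕ) (V : Set M), IsOpen V ∧ μ Vᶜ < ENNReal.ofReal ε ∧
      (⋂ n ∈ Set.Icc (-(N : ℤ)) (N : ℤ), (f.toEquiv ^ n) ⁻¹' V) = ∅ :=
  stmt13_general μ f hpres haper
end

section
/- Let $\varphi : M \to M$ be a homeomorphism of a compact metric space, let $U \subset M$ be open with $\Lambda = \bigcap_{n \in \mathbb{Z}} \varphi^{-n}(U)$ compact, and suppose there exist $N \in \mathbb{N}$ and an open set $V$ with $\bigcap_{|n| \le N} \varphi^{-n}(V) = \emptyset$. Suppose further $\widetilde{U}$ is an open neighborhood of $\Lambda$ with $\bigcup_{n=-N}^{N} \varphi^{-n}(\widetilde{U}) \subset U$. Then, setting $W := \widetilde{U} \cup V$, one has $\bigcap_{n \in \mathbb{Z}} \varphi^{-n}(W) = \Lambda$. -/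
/-- Abstract dynamical core of the appendix: adding an open set `V` whose points
all leave `V` within time `N`, to a small neighborhood `Ũ` of `Λ`, does not change
the maximal invariant set. -/
theorem stmt14 {M : Type*} [MetricSpace M] [CompactSpace M] (f : M ≃ₜ M)
    (U V Ut W Λ : Set M) (hUopen : IsOpen U) (hVopen : IsOpen V) (hUtopen : IsOpen Ut)
    (hΛ : Λ = ⋂ n : ℤ, (f.toEquiv ^ n) ⁻¹' U) (hΛcomp : IsCompact Λ)
    (N : ℕ)
    (hVempty : (⋂ n ∈ Set.Icc (-(N : ℤ)) (N : ℤ), (f.toEquiv ^ n) ⁻¹' V) = ∅)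
    (hΛUt : Λ ⊆ Ut)
    (hUtU : (⋃ n ∈ Set.Icc (-(N : ℤ)) (N : ℤ), (f.toEquiv ^ n) ⁻¹' Ut) ⊆ U)
    (hW : W = Ut ∪ V) :
    (⋂ n : ℤ, (f.toEquiv ^ n) ⁻¹' W) = Λ := by
  subst hW
  ext x
  simp only [Set.mem_iInter, Set.mem_preimage]
  constructor
  · intro hx
    rw [hΛ]
    simp only [Set.mem_iInter, Set.mem_preimage]
    intro n
    have key : ¬ ∀ k ∈ Set.Icc (-(N : ℤ)) (N : ℤ),
        (f.toEquiv ^ k) ((f.toEquiv ^ n) x) ∈ V := by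
      intro h
      have : (f.toEquiv ^ n) x ∈
          (⋂ k ∈ Set.Icc (-(N : ℤ)) (N : ℤ), (f.toEquiv ^ k) ⁻¹' V) := by
        simp only [Set.mem_iInter, Set.mem_preimage]
        exact h
      rw [hVempty] at this
      exact this.elim
    push_neg at key
    obtain ⟨k, hk, hkV⟩ := key
    have hW' : (f.toEquiv ^ (k + n)) x ∈ Ut ∪ V := hx (k + n)
    have hcomp : (f.toEquiv ^ (k + n)) x = (f.toEquiv ^ k) ((f.toEquiv ^ n) x) := by
      rw [zpow_add]; rfl
    rw [hcomp] at hW'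
    have hUt : (f.toEquiv ^ k) ((f.toEquiv ^ n) x) ∈ Ut := hW'.resolve_right hkV
    apply hUtU
    exact Set.mem_iUnion₂.mpr ⟨k, hk, hUt⟩
  · intro hx n
    left
    apply hΛUt
    rw [hΛ]
    simp only [Set.mem_iInter, Set.mem_preimage]
    intro m
    have : (f.toEquiv ^ (m + n)) x = (f.toEquiv ^ m) ((f.toEquiv ^ n) x) := by
      rw [zpow_add]; rfl
    rw [← this]
    rw [hΛ] at hx
    simp only [Set.mem_iInter, Set.mem_preimage] at hx
    exact hx (m + n)
end
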